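/- arXiv:1109.3095 — 4 statements merged into one kernel-verified Lean document; each statement's English description precedes it below -/
import Mathlib

section
/- Let F₀,...,F_L be ω×n matrices over a field F and let F̄_L be the block upper-triangular Toeplitz matrix with blocks F_{j−i} for i ≤ j (and F̄_{−1} be empty, of rank 0). Then x₀ is uniquely determined by (y₀,...,y_L) = (x₀,...,x_L)F̄_L for all (x₀,...,x_L) if and only if rank(F̄_L) − rank(F̄_{L−1}) = ω. -/
open Matrix LinearMap Submodule Module

/-- Shift map: prepend a zero block. -/
private def shiftMap (F : Type*) [Field F] (ω L : ℕ) :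
    ((Fin L × Fin ω → F) →ₗ[F] (Fin (L + 1) × Fin ω → F)) where
  toFun w := fun p => Fin.cases 0 (fun j => w (j, p.2)) p.1
  map_add' w w' := by
    funext p
    obtain ⟨i, a⟩ := p
    induction i using Fin.cases <;> simp
  map_smul' c w := by
    funext p
    obtain ⟨i, a⟩ := p
    induction i using Fin.cases <;> simp

theorem stmt_11 {F : Type*} [Field F] {ω n : ℕ} (L : ℕ)
    (Fc : ℕ → Matrix (Fin ω) (Fin n) F)
    (Fbar : ∀ m : ℕ, Matrix (Fin m × Fin ω) (Fin m × Fin n) F)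
    (hFbar : ∀ m p q, Fbar m p q =
      if (p.1 : ℕ) ≤ (q.1 : ℕ) then Fc ((q.1 : ℕ) - (p.1 : ℕ)) p.2 q.2 else 0) :
    (∀ x x' : Fin (L + 1) → Fin ω → F,
        Matrix.vecMul (fun p => x p.1 p.2) (Fbar (L + 1)) =
          Matrix.vecMul (fun p => x' p.1 p.2) (Fbar (L + 1)) →
        x 0 = x' 0) ↔
      (Fbar (L + 1)).rank = (Fbar L).rank + ω := by
  classical
  set M := Fbar (L + 1) with hM
  set N := Fbar L with hN
  set f := M.vecMulLinear with hf
  set g := N.vecMulLinear with hg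
  set e := shiftMap F ω L with he
  have he_succ : ∀ (w : Fin L × Fin ω → F) (i : Fin L) (a : Fin ω),
      e w (i.succ, a) = w (i, a) := fun w i a => by
    simp [he, shiftMap]
  have he_zero : ∀ (w : Fin L × Fin ω → F) (a : Fin ω), e w (0, a) = 0 := fun w a => by
    simp [he, shiftMap]
  set π : (Fin (L + 1) × Fin ω → F) →ₗ[F] (Fin ω → F) :=
    LinearMap.funLeft F F (fun a => ((0 : Fin (L + 1)), a)) with hπ
  have hπ_apply : ∀ (v : Fin (L + 1) × Fin ω → F) (a : Fin ω), π v a = v (0, a) :=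
    fun v a => rfl
  -- key computation
  have keyA : ∀ (w : Fin L × Fin ω → F) (j : Fin L) (b : Fin n),
      f (e w) (j.succ, b) = g w (j, b) := by
    intro w j b
    show vecMul (e w) M (j.succ, b) = vecMul w N (j, b)
    simp only [vecMul, dotProduct]
    rw [Fintype.sum_prod_type, Fintype.sum_prod_type, Fin.sum_univ_succ]
    simp only [he_zero, zero_mul, Finset.sum_const_zero, zero_add]
    refine Finset.sum_congr rfl fun i _ => Finset.sum_congr rfl fun a _ => ?_
    rw [he_succ, hM, hN, hFbar, hFbar]
    simp only [Fin.val_succ, Nat.succ_sub_succ, Nat.add_le_add_iff_right]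
  have keyA0 : ∀ (w : Fin L × Fin ω → F) (b : Fin n), f (e w) (0, b) = 0 := by
    intro w b
    show vecMul (e w) M (0, b) = 0
    simp only [vecMul, dotProduct]
    rw [Fintype.sum_prod_type, Fin.sum_univ_succ]
    simp only [he_zero, zero_mul, Finset.sum_const_zero, zero_add]
    refine Finset.sum_eq_zero fun i _ => Finset.sum_eq_zero fun a _ => ?_
    rw [hM, hFbar]
    simp
  -- the equivalence between ker f ⊓ ker π and ker g
  have hmem : ∀ w : ker g, e (w : Fin L × Fin ω → F) ∈ ker f ⊓ ker π := by
    intro w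
    refine Submodule.mem_inf.2 ⟨?_, ?_⟩
    · rw [LinearMap.mem_ker]
      funext p
      obtain ⟨j, b⟩ := p
      induction j using Fin.cases with
      | zero => simpa using keyA0 w b
      | succ j =>
        have := keyA w j b
        rw [this]
        have hw : g (w : Fin L × Fin ω → F) = 0 := w.2
        simp [hw]
    · rw [LinearMap.mem_ker]
      funext a
      simp [hπ_apply, he_zero]
  set Φ : ker g →ₗ[F] ↥(ker f ⊓ ker π) :=
    LinearMap.codRestrict _ (e.comp (ker g).subtype) hmem with hΦ
  have hΦbij : Function.Bijective Φ := by
    constructor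
    · intro w w' hww
      have h1 : e (w : Fin L × Fin ω → F) = e (w' : Fin L × Fin ω → F) :=
        congrArg Subtype.val hww
      ext p
      obtain ⟨i, a⟩ := p
      have := congrFun h1 (i.succ, a)
      rwa [he_succ, he_succ] at this
    · rintro ⟨x, hx⟩
      obtain ⟨hx1, hx2⟩ := Submodule.mem_inf.1 hx
      have hx0 : ∀ a, x (0, a) = 0 := by
        intro a
        have := congrFun (LinearMap.mem_ker.1 hx2) a
        rwa [hπ_apply] at this
      set w : Fin L × Fin ω → F := fun p => x (p.1.succ, p.2) with hw
      have hew : e w = x := by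
        funext p
        obtain ⟨i, a⟩ := p
        induction i using Fin.cases with
        | zero => rw [he_zero, hx0]
        | succ i => rw [he_succ]
      have hwker : w ∈ ker g := by
        rw [LinearMap.mem_ker]
        funext p
        obtain ⟨j, b⟩ := p
        have := keyA w j b
        rw [hew] at this
        rw [← this]
        have hfx : f x = 0 := LinearMap.mem_ker.1 hx1
        simp [hfx]
      exact ⟨⟨w, hwker⟩, Subtype.ext hew⟩
  have hEquivWT : Module.finrank F ↥(ker f ⊓ ker π) = Module.finrank F (ker g) :=
    (LinearEquiv.ofBijective Φ hΦbij).finrank_eq.symm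
  -- q : restriction of π to ker f
  set q : ↥(ker f) →ₗ[F] (Fin ω → F) := π.domRestrict (ker f) with hq
  have hkerq : ker q = Submodule.comap (ker f).subtype (ker f ⊓ ker π) := by
    rw [hq, LinearMap.domRestrict, LinearMap.ker_comp, Submodule.comap_inf,
      Submodule.comap_subtype_self, top_inf_eq]
  have hkerq_dim : Module.finrank F (ker q) = Module.finrank F (ker g) := by
    rw [hkerq, ← hEquivWT]
    exact (Submodule.comapSubtypeEquivOfLe inf_le_left).finrank_eq
  have hrn : Module.finrank F (LinearMap.range q) + Module.finrank F (ker q)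
      = Module.finrank F ↥(ker f) := LinearMap.finrank_range_add_finrank_ker q
  -- matrix ranks
  have hrankM : M.rank = Module.finrank F (LinearMap.range f) := by
    rw [← Matrix.rank_transpose M, Matrix.rank, Matrix.mulVecLin_transpose]
  have hrankN : N.rank = Module.finrank F (LinearMap.range g) := by
    rw [← Matrix.rank_transpose N, Matrix.rank, Matrix.mulVecLin_transpose]
  have hA : M.rank + Module.finrank F ↥(ker f) = (L + 1) * ω := by
    rw [hrankM]
    have := LinearMap.finrank_range_add_finrank_ker f
    rw [this]
    simp [Module.finrank_pi]
  have hB : N.rank + Module.finrank F ↥(ker g) = L * ω := by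
    rw [hrankN]
    have := LinearMap.finrank_range_add_finrank_ker g
    rw [this]
    simp [Module.finrank_pi]
  have hmul : (L + 1) * ω = L * ω + ω := by ring
  have hC : Module.finrank F ↥(ker f) =
      Module.finrank F ↥(ker g) + Module.finrank F (LinearMap.range q) := by
    omega
  constructor
  · intro h
    have hq0 : q = 0 := by
      ext v a
      have hv : f (v : Fin (L + 1) × Fin ω → F) = 0 := LinearMap.mem_ker.1 v.2
      have := h (fun i a => (v : Fin (L + 1) × Fin ω → F) (i, a)) 0 ?_
      · exact congrFun this a
      · have h1 : (fun p : Fin (L + 1) × Fin ω =>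
            (v : Fin (L + 1) × Fin ω → F) (p.1, p.2)) = (v : Fin (L + 1) × Fin ω → F) := by
          funext p; rfl
        have h2 : (fun p : Fin (L + 1) × Fin ω =>
            (0 : Fin (L + 1) → Fin ω → F) p.1 p.2) = (0 : Fin (L + 1) × Fin ω → F) := by
          funext p; rfl
        rw [h1, h2, Matrix.zero_vecMul]
        exact hv
    have hr0 : Module.finrank F (LinearMap.range q) = 0 := by
      rw [hq0, LinearMap.range_zero, finrank_bot]
    omega
  · intro hrank x x' hxy
    have hr0 : Module.finrank F (LinearMap.range q) = 0 := by omega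
    have hq0 : q = 0 := by
      rw [← LinearMap.range_eq_bot]
      exact Submodule.finrank_eq_zero.1 hr0
    set u : Fin (L + 1) × Fin ω → F := fun p => x p.1 p.2 with hu
    set u' : Fin (L + 1) × Fin ω → F := fun p => x' p.1 p.2 with hu'
    have hker : u - u' ∈ ker f := by
      rw [LinearMap.mem_ker, map_sub]
      have h1 : f u = vecMul u M := rfl
      have h2 : f u' = vecMul u' M := rfl
      rw [h1, h2, hxy, sub_self]
    have hqv := LinearMap.congr_fun hq0 ⟨u - u', hker⟩
    funext a
    have ha := congrFun hqv a
    simp only [LinearMap.zero_apply, Pi.zero_apply] at ha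
    have : π (u - u') a = 0 := ha
    rw [hπ_apply] at this
    have : u (0, a) - u' (0, a) = 0 := this
    have := sub_eq_zero.1 this
    exact this
end

section
/- With F̄_L as above, the condition rank(F̄_L) − rank(F̄_{L−1}) = ω implies rank([F₀ F₁ ⋯ F_L]) = ω, i.e., the ω × n(L+1) matrix formed by the first block row of F̄_L has full row rank. -/
/-!
Delete the first block row of `F̄_L`: what remains has, up to a leading block column of zeros,
the columns of `F̄_{L-1}`, so its rank is at most `rank F̄_{L-1}`. Hence
`rank F̄_L ≤ rank [F₀ ⋯ F_L] + rank F̄_{L-1}`, and the hypothesis forces `rank [F₀ ⋯ F_L] ≥ ω`,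
which is its number of rows.
-/

open Matrix Module Submodule

namespace Matrix

variable {R : Type*} [Field R] {m m₁ m₂ n k : Type*}

theorem rank_le_rank_add_rank_of_range_subset [Fintype n] [Finite m] [Finite m₁] [Finite m₂]
    {M : Matrix m n R} {A : Matrix m₁ n R} {B : Matrix m₂ n R}
    (h : Set.range M ⊆ Set.range A ∪ Set.range B) : M.rank ≤ A.rank + B.rank := by
  simp only [rank_eq_finrank_span_row]
  calc finrank R (span R (Set.range M))
      ≤ finrank R ↥(span R (Set.range A) ⊔ span R (Set.range B)) :=
        finrank_mono <| by rw [← span_union]; exact span_mono h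
    _ ≤ finrank R (span R (Set.range A)) + finrank R (span R (Set.range B)) :=
        finrank_add_le_finrank_add_finrank _ _

theorem rank_le_rank_of_range_transpose_subset_span [Finite m] [Fintype n] [Fintype k]
    {A : Matrix m n R} {B : Matrix m k R} (h : Set.range Bᵀ ⊆ span R (Set.range Aᵀ)) :
    B.rank ≤ A.rank := by
  rw [rank_eq_finrank_span_cols, rank_eq_finrank_span_cols]
  exact finrank_mono (span_le.mpr h)

end Matrix

section BlockToeplitz

variable {F : Type*} [Field F] {ω n : ℕ}

/-- The paper's `F̄_{m-1}`: the index `m` counts block rows. -/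
def blockToeplitz (Fc : ℕ → Matrix (Fin ω) (Fin n) F) (m : ℕ) :
    Matrix (Fin m × Fin ω) (Fin m × Fin n) F :=
  of fun p q => if (p.1 : ℕ) ≤ q.1 then Fc (q.1 - p.1) p.2 q.2 else 0

def blockFirstRow (Fc : ℕ → Matrix (Fin ω) (Fin n) F) (L : ℕ) :
    Matrix (Fin ω) (Fin (L + 1) × Fin n) F :=
  of fun a q => Fc q.1 a q.2

variable (Fc : ℕ → Matrix (Fin ω) (Fin n) F)

theorem blockToeplitz_succ_zero (L : ℕ) (a : Fin ω) :
    blockToeplitz Fc (L + 1) (0, a) = blockFirstRow Fc L a := by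
  ext q
  simp [blockToeplitz, blockFirstRow]

theorem blockToeplitz_succ_apply_succ_zero (L : ℕ) (i : Fin L) (a : Fin ω) (c : Fin n) :
    blockToeplitz Fc (L + 1) (i.succ, a) (0, c) = 0 := by
  simp [blockToeplitz]

theorem blockToeplitz_succ_apply_succ_succ (L : ℕ) (i j : Fin L) (a : Fin ω) (c : Fin n) :
    blockToeplitz Fc (L + 1) (i.succ, a) (j.succ, c) = blockToeplitz Fc L (i, a) (j, c) := by
  simp [blockToeplitz]

theorem rank_blockToeplitz_succ_le (L : ℕ) :
    (blockToeplitz Fc (L + 1)).rank ≤ (blockFirstRow Fc L).rank + (blockToeplitz Fc L).rank := by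
  set lowerRows : Matrix (Fin L × Fin ω) (Fin (L + 1) × Fin n) F :=
    (blockToeplitz Fc (L + 1)).submatrix (fun p => (p.1.succ, p.2)) id
  have hrows : Set.range (blockToeplitz Fc (L + 1)) ⊆
      Set.range (blockFirstRow Fc L) ∪ Set.range lowerRows := by
    rintro _ ⟨⟨i, a⟩, rfl⟩
    cases i using Fin.cases with
    | zero => exact Or.inl ⟨a, (blockToeplitz_succ_zero Fc L a).symm⟩
    | succ i => exact Or.inr ⟨(i, a), rfl⟩
  have hcols : Set.range lowerRowsᵀ ⊆ span F (Set.range (blockToeplitz Fc L)ᵀ) := by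
    rintro _ ⟨⟨j, c⟩, rfl⟩
    cases j using Fin.cases with
    | zero =>
      have hzero : lowerRowsᵀ (0, c) = 0 := by
        ext p
        exact blockToeplitz_succ_apply_succ_zero Fc L p.1 p.2 c
      exact hzero ▸ zero_mem _
    | succ j =>
      have hshift : lowerRowsᵀ (j.succ, c) = (blockToeplitz Fc L)ᵀ (j, c) := by
        ext p
        exact blockToeplitz_succ_apply_succ_succ Fc L p.1 j p.2 c
      exact hshift ▸ subset_span ⟨(j, c), rfl⟩
  exact (rank_le_rank_add_rank_of_range_subset hrows).trans
    (Nat.add_le_add_left (rank_le_rank_of_range_transpose_subset_span hcols) _)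

end BlockToeplitz

theorem stmt_12 {F : Type*} [Field F] {ω n : ℕ} (L : ℕ)
    (Fc : ℕ → Matrix (Fin ω) (Fin n) F)
    (Fbar : ∀ m : ℕ, Matrix (Fin m × Fin ω) (Fin m × Fin n) F)
    (hFbar : ∀ m p q, Fbar m p q =
      if (p.1 : ℕ) ≤ (q.1 : ℕ) then Fc ((q.1 : ℕ) - (p.1 : ℕ)) p.2 q.2 else 0)
    (firstRow : Matrix (Fin ω) (Fin (L + 1) × Fin n) F)
    (hfirstRow : ∀ a q, firstRow a q = Fc (q.1 : ℕ) a q.2)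
    (hrank : (Fbar (L + 1)).rank = (Fbar L).rank + ω) :
    firstRow.rank = ω := by
  obtain rfl : Fbar = blockToeplitz Fc := by
    funext m
    ext p q
    exact hFbar m p q
  obtain rfl : firstRow = blockFirstRow Fc L := by
    ext a q
    exact hfirstRow a q
  have hle := rank_blockToeplitz_succ_le Fc L
  have hheight : (blockFirstRow Fc L).rank ≤ ω := by
    simpa using (blockFirstRow Fc L).rank_le_card_height
  omega
end

section
/- Let F₀,...,F_L be ω×n matrices over a field F. Suppose rank(F̄_L) − rank(F̄_{L−1}) = ω. Then there exist n×ω matrices D₀,...,D_L over F such that Σ_{i=0}^{L} F_i D_{L−i} = I_ω and Σ_{i=0}^{j} F_i D_{j−i} = 0 for all 0 ≤ j ≤ L−1. -/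
theorem stmt_14 {F : Type*} [Field F] {ω n : ℕ} (L : ℕ)
    (Fc : ℕ → Matrix (Fin ω) (Fin n) F)
    (Fbar : ∀ m : ℕ, Matrix (Fin m × Fin ω) (Fin m × Fin n) F)
    (hFbar : ∀ m p q, Fbar m p q =
      if (p.1 : ℕ) ≤ (q.1 : ℕ) then Fc ((q.1 : ℕ) - (p.1 : ℕ)) p.2 q.2 else 0)
    (hrank : (Fbar (L + 1)).rank = (Fbar L).rank + ω) :
    ∃ D : ℕ → Matrix (Fin n) (Fin ω) F,
      (∑ i ∈ Finset.range (L + 1), Fc i * D (L - i) = 1) ∧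
        ∀ j < L, ∑ i ∈ Finset.range (j + 1), Fc i * D (j - i) = 0 := by
  classical
  set A := Fbar (L + 1) with hA
  set B := Fbar L with hB
  -- projection dropping the top block row
  set π : ((Fin (L + 1) × Fin ω) → F) →ₗ[F] ((Fin L × Fin ω) → F) :=
    LinearMap.funLeft F F (fun ps : Fin L × Fin ω => (ps.1.succ, ps.2)) with hπ
  set ρ : ((Fin (L + 1) × Fin n) → F) →ₗ[F] ((Fin L × Fin n) → F) :=
    LinearMap.funLeft F F (fun qt : Fin L × Fin n => (qt.1.succ, qt.2)) with hρ
  set W := LinearMap.range A.mulVecLin with hW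
  set K := LinearMap.ker π with hK
  -- bottom block rows of A compute as B
  have hcomp : π ∘ₗ A.mulVecLin = B.mulVecLin ∘ₗ ρ := by
    refine LinearMap.ext fun x => funext fun ps => ?_
    obtain ⟨p, s⟩ := ps
    simp only [LinearMap.comp_apply, hπ, hρ, LinearMap.funLeft_apply,
      Matrix.mulVecLin_apply, Matrix.mulVec, dotProduct]
    rw [Fintype.sum_prod_type, Fintype.sum_prod_type, Fin.sum_univ_succ]
    have h0 : ∀ t : Fin n, A (p.succ, s) ((0 : Fin (L + 1)), t) * x (0, t) = 0 := by
      intro t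
      rw [hA, hFbar]
      simp [Fin.val_succ]
    rw [Finset.sum_congr rfl fun t _ => h0 t]
    simp only [Finset.sum_const_zero, zero_add]
    refine Finset.sum_congr rfl fun q _ => Finset.sum_congr rfl fun t _ => ?_
    rw [hA, hB, hFbar, hFbar]
    simp [Fin.val_succ, Nat.succ_sub_succ]
  -- image of the column space under π is contained in the column space of B
  have hπW : Submodule.map π W ≤ LinearMap.range B.mulVecLin := by
    rw [hW, ← LinearMap.range_comp, hcomp]
    exact LinearMap.range_comp_le_range _ _
  -- the kernel of π has dimension at most ω
  have hKfin : Module.finrank F K ≤ ω := by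
    have hinj : Function.Injective
        ((LinearMap.funLeft F F (fun s : Fin ω => ((0 : Fin (L + 1)), s))).comp K.subtype) := by
      intro v w hvw
      ext ps
      obtain ⟨p, s⟩ := ps
      have hv : π (v : (Fin (L + 1) × Fin ω) → F) = 0 := v.2
      have hw : π (w : (Fin (L + 1) × Fin ω) → F) = 0 := w.2
      induction p using Fin.cases with
      | zero =>
        have := congrFun hvw s
        simpa using this
      | succ p =>
        have h1 : π (v : (Fin (L + 1) × Fin ω) → F) (p, s) = 0 := by rw [hv]; rfl
        have h2 : π (w : (Fin (L + 1) × Fin ω) → F) (p, s) = 0 := by rw [hw]; rfl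
        simp only [hπ, LinearMap.funLeft_apply] at h1 h2
        exact h1.trans h2.symm
    have := LinearMap.finrank_le_finrank_of_injective hinj
    simpa [Module.finrank_pi] using this
  -- map π kills K
  have hmapK : Submodule.map π K = ⊥ := by
    rw [eq_bot_iff]
    rintro y ⟨v, hv, rfl⟩
    have hv' : π v = 0 := hv
    simp [hv']
  -- dimension counting: K ≤ W
  have hKW : K ≤ W := by
    have hrn := LinearMap.finrank_range_add_finrank_ker (π ∘ₗ (W ⊔ K).subtype)
    have hrange : LinearMap.range (π ∘ₗ (W ⊔ K).subtype) = Submodule.map π (W ⊔ K) := by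
      rw [LinearMap.range_comp, Submodule.range_subtype]
    have hker : Module.finrank F (LinearMap.ker (π ∘ₗ (W ⊔ K).subtype)) ≤
        Module.finrank F K := by
      rw [← Submodule.finrank_map_subtype_eq (W ⊔ K)]
      refine Submodule.finrank_mono ?_
      rw [LinearMap.ker_comp]
      exact Submodule.map_comap_le _ _
    have hmapsup : Submodule.map π (W ⊔ K) = Submodule.map π W := by
      rw [Submodule.map_sup, hmapK, sup_bot_eq]
    have hfrW : Module.finrank F W = A.rank := rfl
    have hfrB : Module.finrank F (Submodule.map π W) ≤ B.rank :=
      Submodule.finrank_mono hπW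
    have hle : Module.finrank F (W ⊔ K : Submodule F _) ≤ Module.finrank F W := by
      rw [hrange, hmapsup] at hrn
      rw [hfrW, hrank]
      omega
    have heq : W = W ⊔ K := Submodule.eq_of_le_of_finrank_le le_sup_left hle
    rw [heq]
    exact le_sup_right
  -- the standard basis vectors supported on the top block lie in K, hence in W
  have hsol : ∀ k : Fin ω, ∃ x : (Fin (L + 1) × Fin n) → F,
      A.mulVecLin x = fun ps : Fin (L + 1) × Fin ω =>
        if ps.1 = 0 ∧ ps.2 = k then (1 : F) else 0 := by
    intro k
    have hek : (fun ps : Fin (L + 1) × Fin ω =>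
        if ps.1 = 0 ∧ ps.2 = k then (1 : F) else 0) ∈ K := by
      rw [hK, LinearMap.mem_ker]
      ext ps
      obtain ⟨p, s⟩ := ps
      simp [hπ, LinearMap.funLeft_apply, Fin.succ_ne_zero]
    exact hKW hek
  choose x hx using hsol
  -- the decoding matrices
  set D : ℕ → Matrix (Fin n) (Fin ω) F :=
    fun j => Matrix.of fun t k => x k (⟨L - j, Nat.lt_succ_of_le (Nat.sub_le L j)⟩, t) with hD
  -- the main computation, uniform in j ≤ L
  have main : ∀ j, j ≤ L → ∀ s k : Fin ω,
      (∑ i ∈ Finset.range (j + 1), Fc i * D (j - i)) s k =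
        if L - j = 0 ∧ s = k then (1 : F) else 0 := by
    intro j hj s k
    have hLj : L - j < L + 1 := by omega
    have hxk := congrFun (hx k) (⟨L - j, hLj⟩, s)
    simp only [Matrix.mulVecLin_apply, Matrix.mulVec, dotProduct] at hxk
    rw [Fintype.sum_prod_type] at hxk
    set g : ℕ → F := fun q =>
      if hq : q < L + 1 then
        ∑ t, A (⟨L - j, hLj⟩, s) (⟨q, hq⟩, t) * x k (⟨q, hq⟩, t) else 0 with hg
    have h1 : (∑ q : Fin (L + 1), ∑ t, A (⟨L - j, hLj⟩, s) (q, t) * x k (q, t))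
        = ∑ q ∈ Finset.range (L + 1), g q := by
      rw [← Fin.sum_univ_eq_sum_range]
      refine Finset.sum_congr rfl fun q _ => ?_
      rw [hg]
      simp only [Fin.is_lt, dif_pos, Fin.eta]
    rw [h1] at hxk
    have hsplit : L + 1 = (L - j) + (j + 1) := by omega
    have hadd := Finset.sum_range_add g (L - j) (j + 1)
    rw [← hsplit] at hadd
    rw [hadd] at hxk
    have gval : ∀ q, ∀ hq : q < L + 1,
        g q = ∑ t, (if L - j ≤ q then Fc (q - (L - j)) s t else 0) * x k (⟨q, hq⟩, t) := by
      intro q hq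
      refine (dif_pos hq).trans ?_
      refine Finset.sum_congr rfl fun t _ => ?_
      rw [hA, hFbar]
    have h2 : ∑ q ∈ Finset.range (L - j), g q = 0 := by
      refine Finset.sum_eq_zero fun q hq => ?_
      rw [Finset.mem_range] at hq
      have hq' : q < L + 1 := by omega
      rw [gval q hq']
      refine Finset.sum_eq_zero fun t _ => ?_
      rw [if_neg (by omega)]
      ring
    rw [h2, zero_add] at hxk
    have h3 : ∀ i, ∀ hi : i < j + 1,
        g (L - j + i) = ∑ t, Fc i s t * x k (⟨min (L - j + i) L, Nat.lt_succ_of_le (min_le_right _ _)⟩, t) := by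
      intro i hi
      have hq' : L - j + i < L + 1 := by omega
      rw [gval (L - j + i) hq']
      refine Finset.sum_congr rfl fun t _ => ?_
      rw [if_pos (by omega)]
      have e1 : L - j + i - (L - j) = i := by omega
      have e2 : (⟨L - j + i, hq'⟩ : Fin (L + 1)) = ⟨min (L - j + i) L, Nat.lt_succ_of_le (min_le_right _ _)⟩ := by
        simp only [Fin.mk.injEq]
        omega
      rw [e1, e2]
    rw [Finset.sum_congr rfl fun i hi => h3 i (Finset.mem_range.mp hi)] at hxk
    rw [Matrix.sum_apply]
    have h4 : ∀ i, ∀ hi : i < j + 1, (Fc i * D (j - i)) s k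
        = ∑ t, Fc i s t * x k (⟨min (L - j + i) L, Nat.lt_succ_of_le (min_le_right _ _)⟩, t) := by
      intro i hi
      rw [Matrix.mul_apply]
      refine Finset.sum_congr rfl fun t _ => ?_
      show Fc i s t * x k (⟨L - (j - i), Nat.lt_succ_of_le (Nat.sub_le L (j - i))⟩, t) = _
      have e2 : (⟨L - (j - i), Nat.lt_succ_of_le (Nat.sub_le L (j - i))⟩ : Fin (L + 1))
          = ⟨min (L - j + i) L, Nat.lt_succ_of_le (min_le_right _ _)⟩ := by
        simp only [Fin.mk.injEq]
        omega
      rw [e2]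
    rw [Finset.sum_congr rfl fun i hi => h4 i (Finset.mem_range.mp hi), hxk]
    congr 1
    simp only [eq_iff_iff, and_congr_left_iff]
    intro _
    rw [Fin.ext_iff]
    simp
  refine ⟨D, ?_, ?_⟩
  · ext s k
    rw [main L le_rfl s k]
    simp [Matrix.one_apply]
  · intro j hjL
    ext s k
    rw [main j (le_of_lt hjL) s k]
    have : ¬ (L - j = 0) := by omega
    simp [this]
end

section
/- Conversely, if there exist n×ω matrices D₀,...,D_L over a field F with Σ_{i=0}^{L} F_i D_{L−i} = I_ω and Σ_{i=0}^{j} F_i D_{j−i} = 0 for 0 ≤ j ≤ L−1, then rank(F̄_L) − rank(F̄_{L−1}) = ω. -/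
set_option maxHeartbeats 1000000
set_option synthInstance.maxHeartbeats 400000

theorem stmt_15 {F : Type*} [Field F] {ω n : ℕ} (L : ℕ)
    (Fc : ℕ → Matrix (Fin ω) (Fin n) F)
    (Fbar : ∀ m : ℕ, Matrix (Fin m × Fin ω) (Fin m × Fin n) F)
    (hFbar : ∀ m p q, Fbar m p q =
      if (p.1 : ℕ) ≤ (q.1 : ℕ) then Fc ((q.1 : ℕ) - (p.1 : ℕ)) p.2 q.2 else 0)
    (D : ℕ → Matrix (Fin n) (Fin ω) F)
    (hD1 : ∑ i ∈ Finset.range (L + 1), Fc i * D (L - i) = 1)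
    (hD0 : ∀ j < L, ∑ i ∈ Finset.range (j + 1), Fc i * D (j - i) = 0) :
    (Fbar (L + 1)).rank = (Fbar L).rank + ω := by
  classical
  set M := Fbar (L + 1) with hM
  set N := Fbar L with hN
  -- projection dropping the first block row
  set π : ((Fin (L+1) × Fin ω → F)) →ₗ[F] (Fin L × Fin ω → F) :=
    LinearMap.funLeft F F (fun pr => (pr.1.succ, pr.2)) with hπ
  set τ : ((Fin (L+1) × Fin n → F)) →ₗ[F] (Fin L × Fin n → F) :=
    LinearMap.funLeft F F (fun qc => (qc.1.succ, qc.2)) with hτ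
  -- Step A : π ∘ M.mulVecLin = N.mulVecLin ∘ τ
  have stepA : π.comp M.mulVecLin = N.mulVecLin.comp τ := by
    apply LinearMap.ext
    intro x
    funext pr
    obtain ⟨p, r⟩ := pr
    simp only [LinearMap.comp_apply, Matrix.mulVecLin_apply, hπ, hτ,
      LinearMap.funLeft_apply, Matrix.mulVec, dotProduct]
    rw [Fintype.sum_prod_type, Fintype.sum_prod_type, Fin.sum_univ_succ]
    have h0 : ∑ c : Fin n, M (p.succ, r) ((0 : Fin (L+1)), c) * x (0, c) = 0 := by
      apply Finset.sum_eq_zero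
      intro c _
      rw [hM, hFbar]
      simp [Fin.val_succ]
    rw [h0, zero_add]
    apply Finset.sum_congr rfl
    intro q _
    apply Finset.sum_congr rfl
    intro c _
    rw [hM, hN, hFbar, hFbar]
    simp [Fin.val_succ, Nat.succ_sub_succ, Nat.succ_le_succ_iff]
  -- key column computation
  have hcol : ∀ (p : Fin (L+1)) (r s : Fin ω),
      (∑ q : Fin (L+1), ∑ c : Fin n, M (p, r) (q, c) * D (L - (q : ℕ)) c s)
      = (∑ i ∈ Finset.range ((L - (p : ℕ)) + 1), Fc i * D ((L - (p : ℕ)) - i)) r s := by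
    intro p r s
    have hstep : ∀ q : Fin (L+1), ∑ c : Fin n, M (p, r) (q, c) * D (L - (q : ℕ)) c s
        = if (p : ℕ) ≤ (q : ℕ) then (Fc ((q : ℕ) - (p : ℕ)) * D (L - (q : ℕ))) r s else 0 := by
      intro q
      by_cases h : (p : ℕ) ≤ (q : ℕ)
      · rw [if_pos h, Matrix.mul_apply]
        apply Finset.sum_congr rfl
        intro c _
        rw [hM, hFbar, if_pos h]
      · rw [if_neg h]
        apply Finset.sum_eq_zero
        intro c _
        rw [hM, hFbar, if_neg h, zero_mul]
    simp only [hstep]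
    rw [show (∑ q : Fin (L+1), if (p : ℕ) ≤ (q : ℕ) then (Fc ((q:ℕ) - (p:ℕ)) * D (L - (q:ℕ))) r s else 0)
        = ∑ q ∈ Finset.range (L+1), (if (p : ℕ) ≤ q then (Fc (q - (p:ℕ)) * D (L - q)) r s else 0) from
      Fin.sum_univ_eq_sum_range (fun q => if (p:ℕ) ≤ q then (Fc (q - (p:ℕ)) * D (L - q)) r s else 0) (L+1)]
    rw [← Finset.sum_filter]
    have hfil : (Finset.range (L+1)).filter (fun q => (p:ℕ) ≤ q) = Finset.Ico (p:ℕ) (L+1) := by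
      ext q
      simp [Finset.mem_Ico, Finset.mem_filter, Finset.mem_range]
      omega
    rw [hfil, Finset.sum_Ico_eq_sum_range, Matrix.sum_apply]
    have hLp : L + 1 - (p : ℕ) = (L - (p : ℕ)) + 1 := by
      have := p.isLt; omega
    rw [hLp]
    apply Finset.sum_congr rfl
    intro i _

    have h1 : (p : ℕ) + i - (p : ℕ) = i := by omega
    have h2 : L - ((p : ℕ) + i) = L - (p : ℕ) - i := by omega
    rw [h1, h2]
  -- the kernel of π is contained in the column space of M
  have hker_le : LinearMap.ker π ≤ LinearMap.range M.mulVecLin := by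
    intro v hv
    have hv' : ∀ (p : Fin L) (r : Fin ω), v (p.succ, r) = 0 := by
      intro p r
      have := congrFun (LinearMap.mem_ker.mp hv) (p, r)
      simpa [hπ, LinearMap.funLeft_apply] using this
    refine ⟨fun qc => ∑ s, D (L - (qc.1 : ℕ)) qc.2 s * v (0, s), ?_⟩
    funext pr
    obtain ⟨p, r⟩ := pr
    have hexp : M.mulVecLin (fun qc => ∑ s, D (L - (qc.1 : ℕ)) qc.2 s * v (0, s)) (p, r)
        = ∑ s, (∑ i ∈ Finset.range ((L - (p : ℕ)) + 1), Fc i * D ((L - (p : ℕ)) - i)) r s * v (0, s) := by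
      rw [Matrix.mulVecLin_apply]
      show (∑ j : Fin (L+1) × Fin n, M (p, r) j * ∑ s, D (L - (j.1 : ℕ)) j.2 s * v (0, s)) = _
      simp only [Finset.mul_sum]
      rw [Finset.sum_comm]
      apply Finset.sum_congr rfl
      intro s _
      rw [← hcol p r s, Fintype.sum_prod_type, Finset.sum_mul]
      apply Finset.sum_congr rfl
      intro q _
      rw [Finset.sum_mul]
      apply Finset.sum_congr rfl
      intro c _
      ring
    rw [hexp]
    rcases Fin.eq_zero_or_eq_succ p with rfl | ⟨p', rfl⟩
    · rw [show ((0 : Fin (L+1)) : ℕ) = 0 from rfl, Nat.sub_zero, hD1]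
      simp [Matrix.one_apply]
    · have hlt : L - ((p'.succ : Fin (L+1)) : ℕ) < L := by
        have := p'.isLt
        simp [Fin.val_succ]
        omega
      rw [hD0 _ hlt]
      simp [hv']
  -- dimension of the kernel of π is ω
  have hkerdim : Module.finrank F (LinearMap.ker π) = ω := by
    set ψ : ((Fin (L+1) × Fin ω → F)) →ₗ[F] (Fin ω → F) :=
      LinearMap.funLeft F F (fun s => ((0 : Fin (L+1)), s)) with hψ
    have hbij : Function.Bijective (ψ.comp (LinearMap.ker π).subtype) := by
      constructor
      · intro a b hab
        apply Subtype.ext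
        funext pr
        obtain ⟨p, r⟩ := pr
        have ha : ∀ (p : Fin L) (r : Fin ω), (a : Fin (L+1) × Fin ω → F) (p.succ, r) = 0 := by
          intro p r
          have := congrFun (LinearMap.mem_ker.mp a.2) (p, r)
          simpa [hπ, LinearMap.funLeft_apply] using this
        have hb : ∀ (p : Fin L) (r : Fin ω), (b : Fin (L+1) × Fin ω → F) (p.succ, r) = 0 := by
          intro p r
          have := congrFun (LinearMap.mem_ker.mp b.2) (p, r)
          simpa [hπ, LinearMap.funLeft_apply] using this
        rcases Fin.eq_zero_or_eq_succ p with rfl | ⟨p', rfl⟩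
        · have := congrFun hab r
          simpa [hψ, LinearMap.funLeft_apply] using this
        · rw [ha, hb]
      · intro w
        refine ⟨⟨fun pr => if pr.1 = 0 then w pr.2 else 0, ?_⟩, ?_⟩
        · rw [LinearMap.mem_ker]
          funext pr
          simp [hπ, LinearMap.funLeft_apply, Fin.succ_ne_zero]
        · funext s
          simp [hψ, LinearMap.funLeft_apply]
    rw [(LinearEquiv.ofBijective _ hbij).finrank_eq, Module.finrank_fintype_fun_eq_card,
      Fintype.card_fin]
  -- rank--nullity
  have h1 := LinearMap.finrank_range_add_finrank_ker (π.domRestrict (LinearMap.range M.mulVecLin))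
  rw [LinearMap.range_domRestrict, LinearMap.ker_domRestrict] at h1
  have hmap : Submodule.map π (LinearMap.range M.mulVecLin) = LinearMap.range N.mulVecLin := by
    rw [← LinearMap.range_comp, stepA]
    exact LinearMap.range_comp_of_range_eq_top _
      (LinearMap.range_eq_top.mpr (LinearMap.funLeft_surjective_of_injective F F _
        (fun a b hab => by
          obtain ⟨q₁, c₁⟩ := a; obtain ⟨q₂, c₂⟩ := b
          simpa [Prod.ext_iff, Fin.succ_inj] using hab)))
  have hcomap : Module.finrank F
      (Submodule.comap (LinearMap.range M.mulVecLin).subtype (LinearMap.ker π)) = ω := by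
    rw [(Submodule.comapSubtypeEquivOfLe hker_le).finrank_eq]
    exact hkerdim
  rw [hmap, hcomap] at h1
  show Module.finrank F (LinearMap.range M.mulVecLin) = Module.finrank F (LinearMap.range N.mulVecLin) + ω
  omega
end
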